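/- The number of (x₁,…,x₆) ∈ (F_q×)⁶ satisfying (x₁x₅-x₂x₄)(x₁x₆-x₃x₄)(x₂x₆-x₃x₅) = 0 equals (q-1)·[(q-1)⁵/q + ((q-1)³/q)·L], where L = Σ_{t₁,t₂,t₃∈F_q×} θ(t₁+t₂+t₃ - t₁²t₂⁻²t₃ - t₁²t₂⁻³t₃² - t₁t₂⁻²t₃²) = 2q²-3q-1; hence it equals (q-1)·[(q-1)⁵ + (q-1)³(2q²-3q-1)]/q. -/
import Mathlib

open Finset

variable {F : Type} [Field F] [Fintype F] [DecidableEq F]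

lemma card_units_cast : ((Fintype.card Fˣ : ℕ) : ℂ) = (Fintype.card F : ℂ) - 1 := by
  rw [Fintype.card_units, Nat.cast_sub Fintype.card_pos]
  simp

lemma sum_ite_unit (e : Fˣ) (A B : ℂ) :
    ∑ y : Fˣ, (if y = e then A else B) = A + ((Fintype.card F : ℂ) - 2) * B := by
  have h : ∀ y : Fˣ, (if y = e then A else B) = B + (if y = e then A - B else 0) := by
    intro y; split_ifs <;> ring
  rw [Finset.sum_congr rfl fun y _ => h y, Finset.sum_add_distrib, Finset.sum_const,
    Finset.sum_ite_eq' Finset.univ e (fun _ => A - B)]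
  simp [card_univ, nsmul_eq_mul, card_units_cast]
  ring

lemma sum_ite_or (e₁ e₂ : Fˣ) (hne : e₁ ≠ e₂) (A B : ℂ) :
    ∑ y : Fˣ, (if y = e₁ ∨ y = e₂ then A else B)
      = 2 * A + ((Fintype.card F : ℂ) - 3) * B := by
  have h : ∀ y : Fˣ, (if y = e₁ ∨ y = e₂ then A else B)
      = B + ((if y = e₁ then A - B else 0) + (if y = e₂ then A - B else 0)) := by
    intro y
    by_cases h1 : y = e₁
    · subst h1
      rw [if_pos (Or.inl rfl), if_pos rfl, if_neg hne]; ring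
    · by_cases h2 : y = e₂
      · subst h2
        rw [if_pos (Or.inr rfl), if_neg h1, if_pos rfl]; ring
      · rw [if_neg (by tauto), if_neg h1, if_neg h2]; ring
  rw [Finset.sum_congr rfl fun y _ => h y, Finset.sum_add_distrib, Finset.sum_const,
    Finset.sum_add_distrib, Finset.sum_ite_eq' Finset.univ e₁ (fun _ => A - B),
    Finset.sum_ite_eq' Finset.univ e₂ (fun _ => A - B)]
  simp [card_univ, nsmul_eq_mul, card_units_cast]
  ring

lemma sum_units_eq (f : F → ℂ) : ∑ b : Fˣ, f (b : F) = (∑ b : F, f b) - f 0 := by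
  have h1 : ∑ b : Fˣ, f (b : F) = ∑ a : {a : F // a ≠ 0}, f a :=
    Fintype.sum_equiv unitsEquivNeZero _ _ fun x => rfl
  have h2 : ∑ a : {a : F // a ≠ 0}, f (a : F) = ∑ a ∈ Finset.univ.filter (· ≠ (0:F)), f a :=
    (Finset.sum_subtype _ (by simp) f).symm
  rw [h1, h2, Finset.filter_ne', eq_sub_iff_add_eq]
  exact Finset.sum_erase_add _ _ (Finset.mem_univ 0)

lemma sum_theta (θ : AddChar F ℂ) (hθ : θ ≠ 1) (c : F) :
    ∑ b : Fˣ, θ ((b : F) * c) = if c = 0 then (Fintype.card F : ℂ) - 1 else -1 := by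
  have hsum : ∑ b : F, θ (b * c) = if c = 0 then (Fintype.card F : ℂ) else 0 := by
    have := AddChar.sum_mulShift c (AddChar.IsPrimitive.of_ne_one hθ)
    simpa using this
  rw [sum_units_eq (fun b => θ (b * c)), hsum]
  split_ifs <;> simp


lemma L_val (θ : AddChar F ℂ) (hθ : θ ≠ 1) :
    (∑ t₁ : Fˣ, ∑ t₂ : Fˣ, ∑ t₃ : Fˣ,
        θ ((t₁ : F) + (t₂ : F) + (t₃ : F)
          - (t₁ : F) ^ 2 * ((t₂ : F)⁻¹) ^ 2 * (t₃ : F)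
          - (t₁ : F) ^ 2 * ((t₂ : F)⁻¹) ^ 3 * (t₃ : F) ^ 2
          - (t₁ : F) * ((t₂ : F)⁻¹) ^ 2 * (t₃ : F) ^ 2))
      = 2 * (Fintype.card F : ℂ) ^ 2 - 3 * (Fintype.card F : ℂ) - 1 := by
  calc
    (∑ t₁ : Fˣ, ∑ t₂ : Fˣ, ∑ t₃ : Fˣ,
        θ ((t₁ : F) + (t₂ : F) + (t₃ : F)
          - (t₁ : F) ^ 2 * ((t₂ : F)⁻¹) ^ 2 * (t₃ : F)
          - (t₁ : F) ^ 2 * ((t₂ : F)⁻¹) ^ 3 * (t₃ : F) ^ 2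
          - (t₁ : F) * ((t₂ : F)⁻¹) ^ 2 * (t₃ : F) ^ 2))
      = ∑ t₂ : Fˣ, ∑ t₁ : Fˣ, ∑ t₃ : Fˣ,
        θ ((t₁ : F) + (t₂ : F) + (t₃ : F)
          - (t₁ : F) ^ 2 * ((t₂ : F)⁻¹) ^ 2 * (t₃ : F)
          - (t₁ : F) ^ 2 * ((t₂ : F)⁻¹) ^ 3 * (t₃ : F) ^ 2
          - (t₁ : F) * ((t₂ : F)⁻¹) ^ 2 * (t₃ : F) ^ 2) := Finset.sum_comm
    _ = ∑ t₂ : Fˣ, ∑ x : Fˣ, ∑ y : Fˣ,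
          θ ((t₂ : F) * ((1 - (x : F) * (y : F)) * (1 + (x : F)) * (1 + (y : F)))) := by
        refine Finset.sum_congr rfl fun t₂ _ => ?_
        refine Eq.symm (Fintype.sum_equiv (Equiv.mulLeft t₂) _ _ fun x => ?_)
        refine Fintype.sum_equiv (Equiv.mulLeft t₂) _ _ fun y => ?_
        congr 1
        simp only [Equiv.coe_mulLeft, Units.val_mul]
        have h2 : (t₂ : F) ≠ 0 := Units.ne_zero t₂
        field_simp
        ring
    _ = ∑ x : Fˣ, ∑ y : Fˣ, ∑ t₂ : Fˣ,
          θ ((t₂ : F) * ((1 - (x : F) * (y : F)) * (1 + (x : F)) * (1 + (y : F)))) := by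
        rw [Finset.sum_comm]
        exact Finset.sum_congr rfl fun x _ => Finset.sum_comm
    _ = ∑ x : Fˣ, ∑ y : Fˣ,
          (if ((1 - (x : F) * (y : F)) * (1 + (x : F)) * (1 + (y : F))) = 0
            then (Fintype.card F : ℂ) - 1 else -1) :=
        Finset.sum_congr rfl fun x _ => Finset.sum_congr rfl fun y _ => sum_theta θ hθ _
    _ = ∑ x : Fˣ, (if x = (-1 : Fˣ)
          then ((Fintype.card F : ℂ) - 1) * ((Fintype.card F : ℂ) - 1)
          else (Fintype.card F : ℂ) + 1) := by
        refine Finset.sum_congr rfl fun x _ => ?_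
        by_cases hx : x = (-1 : Fˣ)
        · subst hx
          rw [if_pos rfl]
          have h0 : ∀ y : Fˣ, (1 - (((-1 : Fˣ) : F)) * (y : F)) * (1 + ((-1 : Fˣ) : F)) * (1 + (y : F)) = 0 := by
            intro y; simp
          simp only [h0, Finset.sum_const, card_univ, nsmul_eq_mul, card_units_cast]
          simp
        · rw [if_neg hx]
          have hxF : (1 : F) + (x : F) ≠ 0 := by
            intro h
            exact hx (Units.ext (by push_cast; linear_combination h))
          have key : ∀ y : Fˣ,
              ((1 - (x : F) * (y : F)) * (1 + (x : F)) * (1 + (y : F)) = 0)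
                ↔ (y = x⁻¹ ∨ y = (-1 : Fˣ)) := by
            intro y
            have h1 : ((1 : F) - (x : F) * (y : F) = 0) ↔ y = x⁻¹ := by
              rw [sub_eq_zero, eq_comm]
              constructor
              · intro h
                have hxy : x * y = 1 := Units.ext (by push_cast; exact h)
                exact (mul_eq_one_iff_inv_eq.mp hxy).symm
              · rintro rfl
                rw [← Units.val_mul, mul_inv_cancel, Units.val_one]
            have h2 : ((1 : F) + (y : F) = 0) ↔ y = (-1 : Fˣ) := by
              constructor
              · intro h
                exact Units.ext (by push_cast; linear_combination h)
              · rintro rfl; simp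
            rw [mul_eq_zero, mul_eq_zero, h1, h2]
            simp [hxF]
          rw [Finset.sum_congr rfl fun y _ =>
            if_congr (key y) rfl rfl]
          rw [sum_ite_or x⁻¹ (-1 : Fˣ) (by
            intro h
            apply hx
            rw [← inv_inv x, h]
            simp) ((Fintype.card F : ℂ) - 1) (-1)]
          ring
    _ = 2 * (Fintype.card F : ℂ) ^ 2 - 3 * (Fintype.card F : ℂ) - 1 := by
        rw [sum_ite_unit (-1 : Fˣ)]
        ring


def e6 {α : Type*} : (Fin 6 → α) ≃ α × α × α × α × α × α where
  toFun x := (x 0, x 1, x 2, x 3, x 4, x 5)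
  invFun p := ![p.1, p.2.1, p.2.2.1, p.2.2.2.1, p.2.2.2.2.1, p.2.2.2.2.2]
  left_inv x := by funext i; fin_cases i <;> rfl
  right_inv p := rfl

lemma count_val :
    (Nat.card {x : Fin 6 → Fˣ |
        ((x 0 : F) * (x 4 : F) - (x 1 : F) * (x 3 : F)) *
        ((x 0 : F) * (x 5 : F) - (x 2 : F) * (x 3 : F)) *
        ((x 1 : F) * (x 5 : F) - (x 2 : F) * (x 4 : F)) = 0} : ℂ)
      = ((Fintype.card F : ℂ) - 1) ^ 4 * (3 * (Fintype.card F : ℂ) - 5) := by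
  have hcast : (Nat.card {x : Fin 6 → Fˣ |
        ((x 0 : F) * (x 4 : F) - (x 1 : F) * (x 3 : F)) *
        ((x 0 : F) * (x 5 : F) - (x 2 : F) * (x 3 : F)) *
        ((x 1 : F) * (x 5 : F) - (x 2 : F) * (x 4 : F)) = 0} : ℂ)
      = ∑ x : Fin 6 → Fˣ,
          (if ((x 0 : F) * (x 4 : F) - (x 1 : F) * (x 3 : F)) *
            ((x 0 : F) * (x 5 : F) - (x 2 : F) * (x 3 : F)) *
            ((x 1 : F) * (x 5 : F) - (x 2 : F) * (x 4 : F)) = 0 then (1:ℂ) else 0) := by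
    rw [Nat.card_eq_fintype_card, Fintype.card_subtype, Finset.card_filter]
    push_cast
    simp only [Set.mem_setOf_eq]
  rw [hcast]
  have inner_v : ∀ a b c d u : Fˣ,
      (∑ v : Fˣ, if ((a:F)*(u:F) - (b:F)*(d:F)) * ((a:F)*(v:F) - (c:F)*(d:F)) *
          ((b:F)*(v:F) - (c:F)*(u:F)) = 0 then (1:ℂ) else 0)
        = if u = a⁻¹*(b*d) then (Fintype.card F : ℂ) - 1 else 2 := by
    intro a b c d u
    have hcond : ∀ (p r s : Fˣ), ((p:F)*(r:F) - (s:F) = 0) ↔ r = p⁻¹ * s := by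
      intro p r s
      rw [sub_eq_zero, eq_inv_mul_iff_mul_eq, Units.ext_iff, Units.val_mul]
    by_cases hu : u = a⁻¹*(b*d)
    · rw [if_pos hu]
      have hz : (a:F)*(u:F) - (b:F)*(d:F) = 0 := by
        rw [show ((b:F)*(d:F)) = ((b*d : Fˣ) : F) from (Units.val_mul b d).symm, hcond]
        exact hu
      simp only [hz, zero_mul, if_pos rfl, Finset.sum_const, card_univ, nsmul_eq_mul,
        card_units_cast, mul_one]
      simp
    · rw [if_neg hu]
      have h1 : (a:F)*(u:F) - (b:F)*(d:F) ≠ 0 := by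
        rw [Ne, show ((b:F)*(d:F)) = ((b*d : Fˣ) : F) from (Units.val_mul b d).symm, hcond]
        exact hu
      have key : ∀ v : Fˣ,
          (((a:F)*(u:F) - (b:F)*(d:F)) * ((a:F)*(v:F) - (c:F)*(d:F)) *
            ((b:F)*(v:F) - (c:F)*(u:F)) = 0)
            ↔ (v = a⁻¹*(c*d) ∨ v = b⁻¹*(c*u)) := by
        intro v
        rw [mul_eq_zero, mul_eq_zero]
        rw [show ((c:F)*(d:F)) = ((c*d : Fˣ) : F) from (Units.val_mul c d).symm,
          show ((c:F)*(u:F)) = ((c*u : Fˣ) : F) from (Units.val_mul c u).symm,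
          hcond, hcond]
        simp [h1]
      have hne : a⁻¹*(c*d) ≠ b⁻¹*(c*u) := by
        intro h
        apply hu
        have h' : b * (a⁻¹*(c*d)) = c * u := eq_inv_mul_iff_mul_eq.mp h
        have h2 : c * u = c * (a⁻¹ * (b*d)) := by
          rw [← h']; simp [mul_comm, mul_left_comm, mul_assoc]
        exact mul_left_cancel h2
      rw [Finset.sum_congr rfl fun v _ => if_congr (key v) rfl rfl,
        sum_ite_or _ _ hne (1:ℂ) 0]
      ring
  have inner_u : ∀ a b c d : Fˣ,
      (∑ u : Fˣ, ∑ v : Fˣ, if ((a:F)*(u:F) - (b:F)*(d:F)) * ((a:F)*(v:F) - (c:F)*(d:F)) *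
          ((b:F)*(v:F) - (c:F)*(u:F)) = 0 then (1:ℂ) else 0)
        = 3 * (Fintype.card F : ℂ) - 5 := by
    intro a b c d
    rw [Finset.sum_congr rfl fun u _ => inner_v a b c d u,
      sum_ite_unit (a⁻¹*(b*d)) ((Fintype.card F : ℂ) - 1) 2]
    ring
  calc (∑ x : Fin 6 → Fˣ,
          (if ((x 0 : F) * (x 4 : F) - (x 1 : F) * (x 3 : F)) *
            ((x 0 : F) * (x 5 : F) - (x 2 : F) * (x 3 : F)) *
            ((x 1 : F) * (x 5 : F) - (x 2 : F) * (x 4 : F)) = 0 then (1:ℂ) else 0))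
      = ∑ p : Fˣ × Fˣ × Fˣ × Fˣ × Fˣ × Fˣ,
          (if ((p.1 : F) * (p.2.2.2.2.1 : F) - (p.2.1 : F) * (p.2.2.2.1 : F)) *
            ((p.1 : F) * (p.2.2.2.2.2 : F) - (p.2.2.1 : F) * (p.2.2.2.1 : F)) *
            ((p.2.1 : F) * (p.2.2.2.2.2 : F) - (p.2.2.1 : F) * (p.2.2.2.2.1 : F)) = 0
            then (1:ℂ) else 0) := Fintype.sum_equiv e6 _ _ fun x => rfl
    _ = ((Fintype.card F : ℂ) - 1) ^ 4 * (3 * (Fintype.card F : ℂ) - 5) := by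
        simp only [Fintype.sum_prod_type]
        rw [Finset.sum_congr rfl fun a _ => Finset.sum_congr rfl fun b _ =>
          Finset.sum_congr rfl fun c _ => Finset.sum_congr rfl fun d _ => inner_u a b c d]
        simp only [Finset.sum_const, card_univ, nsmul_eq_mul, card_units_cast]
        ring


theorem stmt18 (F : Type) [Field F] [Fintype F] [DecidableEq F] (q : ℕ) (hq : q = Fintype.card F)
    (θ : AddChar F ℂ) (hθ : θ ≠ 1) (L : ℂ)
    (hL : L = ∑ t₁ : Fˣ, ∑ t₂ : Fˣ, ∑ t₃ : Fˣ,
        θ ((t₁ : F) + (t₂ : F) + (t₃ : F)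
          - (t₁ : F) ^ 2 * ((t₂ : F)⁻¹) ^ 2 * (t₃ : F)
          - (t₁ : F) ^ 2 * ((t₂ : F)⁻¹) ^ 3 * (t₃ : F) ^ 2
          - (t₁ : F) * ((t₂ : F)⁻¹) ^ 2 * (t₃ : F) ^ 2)) :
    (Nat.card {x : Fin 6 → Fˣ |
        ((x 0 : F) * (x 4 : F) - (x 1 : F) * (x 3 : F)) *
        ((x 0 : F) * (x 5 : F) - (x 2 : F) * (x 3 : F)) *
        ((x 1 : F) * (x 5 : F) - (x 2 : F) * (x 4 : F)) = 0} : ℂ)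
      = ((q : ℂ) - 1) * (((q : ℂ) - 1) ^ 5 / q + ((q : ℂ) - 1) ^ 3 / q * L) ∧
    L = 2 * (q : ℂ) ^ 2 - 3 * q - 1 := by
  subst hq
  have hL2 : L = 2 * (Fintype.card F : ℂ) ^ 2 - 3 * (Fintype.card F : ℂ) - 1 := by
    rw [hL]; exact L_val θ hθ
  refine ⟨?_, hL2⟩
  rw [count_val, hL2]
  have hq0 : (Fintype.card F : ℂ) ≠ 0 := Nat.cast_ne_zero.mpr Fintype.card_ne_zero
  field_simp
  ring
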